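/- arXiv:1508.03052 — 2 statements merged into one kernel-verified Lean document; each statement's English description precedes it below -/
import Mathlib

section
/- Every finite tree T with at least one edge satisfies χ'_s(T) = σ(T). -/
open SimpleGraph

/-- The degree of a vertex (cardinality of its neighbor set). -/
noncomputable def ndeg {V : Type*} (G : SimpleGraph V) (v : V) : ℕ :=
  (G.neighborSet v).ncard

/-- `σ(G)`: the maximum of `deg x + deg y - 1` over all edges `xy` of `G`. -/
noncomputable def sigmaG {V : Type*} (G : SimpleGraph V) : ℕ :=
  sSup {m | ∃ x y, G.Adj x y ∧ m = ndeg G x + ndeg G y - 1}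

/-- The maximum degree `Δ(G)`. -/
noncomputable def maxDeg {V : Type*} (G : SimpleGraph V) : ℕ :=
  sSup (Set.range (ndeg G))

/-- Two edges are at distance at most two: they share an endpoint, or an endpoint of
one is adjacent to an endpoint of the other. -/
def EdgesNear {V : Type*} (G : SimpleGraph V) (e f : Sym2 V) : Prop :=
  ∃ u v, u ∈ e ∧ v ∈ f ∧ (u = v ∨ G.Adj u v)

/-- A strong edge-coloring: every two distinct edges at distance at most two
receive different colors. -/
def IsStrongEdgeColoring {V α : Type*} (G : SimpleGraph V) (φ : Sym2 V → α) : Prop :=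
  ∀ e ∈ G.edgeSet, ∀ f ∈ G.edgeSet, e ≠ f → EdgesNear G e f → φ e ≠ φ f

/-- The strong chromatic index `χ'ₛ(G)`: the least `k` such that `G` has a strong
edge-coloring with colors `0, …, k-1`. -/
noncomputable def strongChromaticIndex {V : Type*} (G : SimpleGraph V) : ℕ :=
  sInf {k | ∃ φ : Sym2 V → ℕ, (∀ e ∈ G.edgeSet, φ e < k) ∧ IsStrongEdgeColoring G φ}

/-- The set of edges incident with a vertex `v`. -/
def Einc {V : Type*} (G : SimpleGraph V) (v : V) : Set (Sym2 V) :=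
  {e ∈ G.edgeSet | v ∈ e}

/-!
The lower bound holds in every graph: the edges at the two ends of an edge `xy` are pairwise
at distance at most two, so they need `deg x + deg y - 1` distinct colours.

For the upper bound, the first vertices `a, v, w` of a longest path in a forest span a pendant
edge `av` such that every neighbour of `v` other than `w` is a leaf. Every other edge within
distance two of `av` is then incident with `v` or `w`, so there are fewer than `σ` of them, and
a strong colouring of the forest without `av`, obtained by induction, leaves a colour for `av`.
-/

namespace SimpleGraph

variable {V : Type*} {G : SimpleGraph V}

lemma exists_lt_forall_ne_of_ncard_lt {α : Type*} {s : Set α} (hs : s.Finite) (φ : α → ℕ)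
    {k : ℕ} (hk : s.ncard < k) : ∃ c < k, ∀ x ∈ s, φ x ≠ c := by
  have hcard : (φ '' s).ncard < (Set.Iio k).ncard :=
    (Set.ncard_image_le hs).trans_lt (by rwa [Set.ncard_Iio_nat])
  obtain ⟨c, hck, hc⟩ := Set.exists_mem_notMem_of_ncard_lt_ncard hcard (hs.image φ)
  exact ⟨c, hck, fun x hx hxc => hc ⟨x, hx, hxc⟩⟩

lemma ndeg_mono [Finite V] {H : SimpleGraph V} (h : H ≤ G) (v : V) : ndeg H v ≤ ndeg G v :=
  Set.ncard_le_ncard (neighborSet_mono h v)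

lemma ncard_incidenceSet (G : SimpleGraph V) (v : V) : (G.incidenceSet v).ncard = ndeg G v := by
  classical
  exact Set.ncard_congr' (G.incidenceSetEquivNeighborSet v)

lemma ncard_incidenceSet_union_of_adj [Finite V] {x y : V} (h : G.Adj x y) :
    (G.incidenceSet x ∪ G.incidenceSet y).ncard = ndeg G x + ndeg G y - 1 := by
  have hunion := Set.ncard_union_add_ncard_inter (G.incidenceSet x) (G.incidenceSet y)
  rw [G.incidenceSet_inter_incidenceSet_of_adj h, Set.ncard_singleton, ncard_incidenceSet,
    ncard_incidenceSet] at hunion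
  omega

lemma EdgesNear.symm {e f : Sym2 V} (h : EdgesNear G e f) : EdgesNear G f e := by
  obtain ⟨u, v, hu, hv, huv⟩ := h
  exact ⟨v, u, hv, hu, huv.imp Eq.symm Adj.symm⟩

lemma edgesNear_of_mem_incidenceSet_union {x y : V} (h : G.Adj x y) {e f : Sym2 V}
    (he : e ∈ G.incidenceSet x ∪ G.incidenceSet y)
    (hf : f ∈ G.incidenceSet x ∪ G.incidenceSet y) : EdgesNear G e f := by
  rcases he with ⟨-, hex⟩ | ⟨-, hey⟩ <;> rcases hf with ⟨-, hfx⟩ | ⟨-, hfy⟩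
  · exact ⟨x, x, hex, hfx, .inl rfl⟩
  · exact ⟨x, y, hex, hfy, .inr h⟩
  · exact ⟨y, x, hey, hfx, .inr h.symm⟩
  · exact ⟨y, y, hey, hfy, .inl rfl⟩

lemma ndeg_add_ndeg_sub_one_le_of_isStrongEdgeColoring [Finite V] {k : ℕ} {φ : Sym2 V → ℕ}
    (hlt : ∀ e ∈ G.edgeSet, φ e < k) (hφ : IsStrongEdgeColoring G φ) {x y : V}
    (h : G.Adj x y) : ndeg G x + ndeg G y - 1 ≤ k := by
  have hsub : G.incidenceSet x ∪ G.incidenceSet y ⊆ G.edgeSet :=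
    Set.union_subset (G.incidenceSet_subset x) (G.incidenceSet_subset y)
  rw [← ncard_incidenceSet_union_of_adj h, ← Set.ncard_Iio_nat k]
  refine Set.ncard_le_ncard_of_injOn φ (fun e he => hlt e (hsub he)) ?_
  intro e he f hf hef
  by_contra hne
  exact hφ e (hsub he) f (hsub hf) hne (edgesNear_of_mem_incidenceSet_union h he hf) hef

lemma ndeg_add_ndeg_sub_one_le_sigmaG [Finite V] {x y : V} (h : G.Adj x y) :
    ndeg G x + ndeg G y - 1 ≤ sigmaG G := by
  refine le_csSup ?_ ⟨x, y, h, rfl⟩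
  refine ((Set.finite_range fun p : V × V => ndeg G p.1 + ndeg G p.2 - 1).subset ?_).bddAbove
  rintro m ⟨x, y, -, rfl⟩
  exact ⟨(x, y), rfl⟩

lemma sigmaG_le {k : ℕ} (h : ∀ x y, G.Adj x y → ndeg G x + ndeg G y - 1 ≤ k) :
    sigmaG G ≤ k :=
  csSup_le' fun _ ⟨x, y, hxy, hm⟩ => hm ▸ h x y hxy

lemma IsAcyclic.eq_snd_of_adj_of_forall_length_le (hG : G.IsAcyclic) {u v z : V}
    {p : G.Walk u v} (hp : p.IsPath)
    (hmax : ∀ (x y : V) (q : G.Walk x y), q.IsPath → q.length ≤ p.length) (hz : G.Adj u z) :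
    z = p.snd := by
  by_cases hzp : z ∈ p.support
  · exact hG.eq_snd_of_adj_start hp hz hzp
  · have := hmax _ _ _ (hp.cons hzp (h := hz.symm))
    simp only [Walk.length_cons] at this
    omega

/-- Take the first vertices `a v w` of a longest path, or `w = a` if that path is a single
edge. -/
lemma IsAcyclic.exists_leaf_adj_of_edgeSet_nonempty [Finite V] (hG : G.IsAcyclic)
    (hE : G.edgeSet.Nonempty) :
    ∃ a v w, G.Adj a v ∧ G.Adj v w ∧ (∀ z, G.Adj a z → z = v) ∧
      ∀ u, G.Adj v u → u ≠ w → ∀ z, G.Adj u z → z = v := by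
  obtain ⟨e, he⟩ := hE
  induction e using Sym2.ind with | _ x y => ?_
  have : Nonempty V := ⟨x⟩
  obtain ⟨a, b, p, hp, hmax⟩ := Walk.exists_isPath_forall_isPath_length_le_length G
  have hlen : 1 ≤ p.length := hmax _ _ _ (Path.singleton he).property
  cases p with
  | nil => simp at hlen
  | @cons _ v _ hav q => ?_
  have hleaf : ∀ z, G.Adj a z → z = v := fun z hz =>
    (hG.eq_snd_of_adj_of_forall_length_le hp hmax hz).trans (Walk.snd_cons q hav)
  cases q with
  | nil =>
    refine ⟨a, _, a, hav, hav.symm, hleaf, fun u hvu hua => absurd ?_ hua⟩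
    have := hG.eq_snd_of_adj_of_forall_length_le hp.reverse
      (fun x y q hq => (hmax x y q hq).trans_eq (Walk.length_reverse _).symm) hvu
    simpa using this
  | @cons _ w _ hvw r =>
    refine ⟨a, v, w, hav, hvw, hleaf, fun u hvu huw z hz => ?_⟩
    have hq : (Walk.cons hvw r).IsPath := hp.of_cons
    have hu : u ∉ (Walk.cons hvw r).support := fun hu =>
      huw ((hG.eq_snd_of_adj_start hq hvu hu).trans (Walk.snd_cons r hvw))
    have := hG.eq_snd_of_adj_of_forall_length_le (hq.cons hu (h := hvu.symm))
      (fun x y q hq => (hmax x y q hq).trans_eq (by simp)) hz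
    simpa using this

lemma eq_of_mem_of_forall_adj_eq {a v : V} (ha : ∀ z, G.Adj a z → z = v) {f : Sym2 V}
    (hf : f ∈ G.edgeSet) (haf : a ∈ f) : f = s(a, v) := by
  rw [← Sym2.other_spec haf] at hf ⊢
  rw [ha (Sym2.Mem.other haf) hf]

lemma EdgesNear.deleteEdges_of_forall_adj_eq {a v : V} (ha : ∀ z, G.Adj a z → z = v)
    {f g : Sym2 V} (hf : f ∈ G.edgeSet \ {s(a, v)}) (hg : g ∈ G.edgeSet \ {s(a, v)})
    (h : EdgesNear G f g) : EdgesNear (G.deleteEdges {s(a, v)}) f g := by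
  obtain ⟨x, y, hx, hy, rfl | hxy⟩ := h
  · exact ⟨x, x, hx, hy, .inl rfl⟩
  refine ⟨x, y, hx, hy, .inr (deleteEdges_adj.2 ⟨hxy, fun hxya => ?_⟩)⟩
  rcases Sym2.eq_iff.1 hxya with ⟨rfl, -⟩ | ⟨-, rfl⟩
  · exact hf.2 (eq_of_mem_of_forall_adj_eq ha hf.1 hx)
  · exact hg.2 (eq_of_mem_of_forall_adj_eq ha hg.1 hy)

lemma IsStrongEdgeColoring.update_of_forall_adj_eq [DecidableEq V] {α : Type*} {a v : V}
    (ha : ∀ z, G.Adj a z → z = v) {φ : Sym2 V → α}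
    (hφ : IsStrongEdgeColoring (G.deleteEdges {s(a, v)}) φ) {c : α}
    (hc : ∀ f ∈ G.edgeSet \ {s(a, v)}, EdgesNear G s(a, v) f → φ f ≠ c) :
    IsStrongEdgeColoring G (Function.update φ s(a, v) c) := by
  have hdel : ∀ f ∈ G.edgeSet \ {s(a, v)}, f ∈ (G.deleteEdges {s(a, v)}).edgeSet := fun f hf => by
    rwa [edgeSet_deleteEdges]
  intro f hf g hg hfg hnear
  by_cases hfe : f = s(a, v) <;> by_cases hge : g = s(a, v)
  · exact absurd (hfe.trans hge.symm) hfg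
  · subst hfe
    rw [Function.update_self, Function.update_of_ne hge]
    exact (hc g ⟨hg, hge⟩ hnear).symm
  · subst hge
    rw [Function.update_self, Function.update_of_ne hfe]
    exact hc f ⟨hf, hfe⟩ hnear.symm
  · rw [Function.update_of_ne hfe, Function.update_of_ne hge]
    exact hφ f (hdel f ⟨hf, hfe⟩) g (hdel g ⟨hg, hge⟩) hfg
      (hnear.deleteEdges_of_forall_adj_eq ha ⟨hf, hfe⟩ ⟨hg, hge⟩)

lemma ncard_edgesNear_lt_of_forall_adj_eq [Finite V] {a v w : V} (hav : G.Adj a v)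
    (hvw : G.Adj v w) (ha : ∀ z, G.Adj a z → z = v)
    (hv : ∀ u, G.Adj v u → u ≠ w → ∀ z, G.Adj u z → z = v) {k : ℕ}
    (hk : ndeg G v + ndeg G w - 1 ≤ k) :
    {f ∈ G.edgeSet \ {s(a, v)} | EdgesNear G s(a, v) f}.ncard < k := by
  have hsub : {f ∈ G.edgeSet \ {s(a, v)} | EdgesNear G s(a, v) f} ⊆
      (G.incidenceSet v ∪ G.incidenceSet w) \ {s(a, v)} := by
    rintro f ⟨⟨hf, hfe⟩, x, y, hx, hy, hxy⟩
    refine ⟨?_, hfe⟩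
    have hya : y ≠ a := fun hya => hfe (eq_of_mem_of_forall_adj_eq ha hf (hya ▸ hy))
    have hyv : y = v ∨ G.Adj v y := by
      rcases Sym2.mem_iff.1 hx with rfl | rfl <;> rcases hxy with rfl | hxy
      · exact absurd rfl hya
      · exact .inl (ha y hxy)
      · exact .inl rfl
      · exact .inr hxy
    rcases hyv with rfl | hvy
    · exact .inl ⟨hf, hy⟩
    by_cases hyw : y = w
    · exact .inr ⟨hf, hyw ▸ hy⟩
    · rw [← Sym2.other_spec hy] at hf ⊢
      have hother := hv y hvy hyw (Sym2.Mem.other hy) hf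
      rw [hother] at hf ⊢
      exact .inl ⟨hf, Sym2.mem_mk_right _ _⟩
  have hmem : s(a, v) ∈ G.incidenceSet v ∪ G.incidenceSet w := .inl ⟨hav, Sym2.mem_mk_right _ _⟩
  have hunion := ncard_incidenceSet_union_of_adj hvw
  have hpos : (G.incidenceSet v ∪ G.incidenceSet w).ncard ≠ 0 := Set.ncard_ne_zero_of_mem hmem
  calc _ ≤ ((G.incidenceSet v ∪ G.incidenceSet w) \ {s(a, v)}).ncard := Set.ncard_le_ncard hsub
    _ = (G.incidenceSet v ∪ G.incidenceSet w).ncard - 1 := Set.ncard_sdiff_singleton_of_mem hmem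
    _ < k := by omega

theorem IsAcyclic.exists_strongEdgeColoring [Finite V] (hG : G.IsAcyclic) {k : ℕ}
    (hk : ∀ x y, G.Adj x y → ndeg G x + ndeg G y - 1 ≤ k) :
    ∃ φ : Sym2 V → ℕ, (∀ e ∈ G.edgeSet, φ e < k) ∧ IsStrongEdgeColoring G φ := by
  classical
  induction hn : G.edgeSet.ncard using Nat.strong_induction_on generalizing G with
  | _ n ih =>
  rcases G.edgeSet.eq_empty_or_nonempty with hE | hE
  · exact ⟨0, by simp [hE], by simp [IsStrongEdgeColoring, hE]⟩
  obtain ⟨a, v, w, hav, hvw, ha, hv⟩ := hG.exists_leaf_adj_of_edgeSet_nonempty hE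
  set G' := G.deleteEdges {s(a, v)}
  have hle : G' ≤ G := deleteEdges_le _
  have hedges : G'.edgeSet = G.edgeSet \ {s(a, v)} := edgeSet_deleteEdges _
  have hlt : G'.edgeSet.ncard < n := hn ▸ hedges ▸ Set.ncard_sdiff_singleton_lt_of_mem hav
  obtain ⟨φ, hφk, hφ⟩ := ih _ hlt (hG.anti hle)
    (fun x y hxy => le_trans (by gcongr <;> exact ndeg_mono hle _)
      (hk x y (hle hxy))) rfl
  obtain ⟨c, hck, hc⟩ := exists_lt_forall_ne_of_ncard_lt (Set.toFinite _) φ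
    (ncard_edgesNear_lt_of_forall_adj_eq hav hvw ha hv (hk v w hvw))
  refine ⟨Function.update φ s(a, v) c, fun f hf => ?_,
    hφ.update_of_forall_adj_eq ha fun f hf hnear => hc f ⟨hf, hnear⟩⟩
  by_cases hfe : f = s(a, v)
  · rwa [hfe, Function.update_self]
  · rw [Function.update_of_ne hfe]
    exact hφk f (hedges ▸ ⟨hf, hfe⟩)

theorem IsAcyclic.exists_strongEdgeColoring_iff_sigmaG_le [Finite V] (hG : G.IsAcyclic)
    (k : ℕ) :
    (∃ φ : Sym2 V → ℕ, (∀ e ∈ G.edgeSet, φ e < k) ∧ IsStrongEdgeColoring G φ) ↔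
      sigmaG G ≤ k :=
  ⟨fun ⟨_, hlt, hφ⟩ => sigmaG_le fun _ _ =>
      ndeg_add_ndeg_sub_one_le_of_isStrongEdgeColoring hlt hφ,
    fun hk => hG.exists_strongEdgeColoring fun _ _ h =>
      (ndeg_add_ndeg_sub_one_le_sigmaG h).trans hk⟩

end SimpleGraph

theorem strong_chromatic_index_of_tree_general {V : Type*} [Fintype V] (T : SimpleGraph V)
    (hT : T.IsTree) :
    strongChromaticIndex T = sigmaG T := by
  simp_rw [strongChromaticIndex, hT.isAcyclic.exists_strongEdgeColoring_iff_sigmaG_le]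
  exact csInf_Ici

theorem strong_chromatic_index_of_tree {V : Type*} [Fintype V] (T : SimpleGraph V)
    (hT : T.IsTree) (hE : T.edgeSet.Nonempty) :
    strongChromaticIndex T = sigmaG T :=
  strong_chromatic_index_of_tree_general T hT
end

section
/- Let n ≥ 1 and d ≥ 2 be integers and let G_{3n+1,d} be the graph obtained from the cycle (x_1, x_2, …, x_{3n+1}) by adding d−2 pendant leaves adjacent to each vertex x_{3i} for 1 ≤ i ≤ n. Then σ(G_{3n+1,d}) = d+1 and χ'_s(G_{3n+1,d}) > σ(G_{3n+1,d}). -/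
open SimpleGraph

/-- Generating relation for `G_{3n+1,d}`: the cycle `x_1, …, x_{3n+1}` (vertex `x_k`
is represented by `(k - 1 : ZMod (3n+1))`), together with, for each `1 ≤ i ≤ n`,
`d - 2` pendant leaves attached to `x_{3i}` (represented by `(3(i-1) + 2 : ZMod (3n+1))`). -/
def JellyRel (n d : ℕ) :
    (ZMod (3 * n + 1) ⊕ (Fin n × Fin (d - 2))) →
    (ZMod (3 * n + 1) ⊕ (Fin n × Fin (d - 2))) → Prop
  | Sum.inl i, Sum.inl j => j = i + 1
  | Sum.inr p, Sum.inl j => j = ((3 * p.1.val + 2 : ℕ) : ZMod (3 * n + 1))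
  | _, _ => False

/-- The graph `G_{3n+1,d}`: a cycle of length `3n+1` with `d - 2` pendant leaves
added at each vertex `x_{3i}`, `1 ≤ i ≤ n`. -/
def Jelly (n d : ℕ) : SimpleGraph (ZMod (3 * n + 1) ⊕ (Fin n × Fin (d - 2))) :=
  SimpleGraph.fromRel (JellyRel n d)

section JellyAux
variable (n d : ℕ)

instance : NeZero (3*n+1) := ⟨by omega⟩

lemma zmod_cast_inj {a b : ℕ} (ha : a < 3*n+1) (hb : b < 3*n+1) :
    ((a : ZMod (3*n+1)) = (b : ZMod (3*n+1))) ↔ a = b := by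
  rw [ZMod.natCast_eq_natCast_iff', Nat.mod_eq_of_lt ha, Nat.mod_eq_of_lt hb]

lemma zc_ne {a b : ℕ} (ha : a < 3*n+1) (hb : b < 3*n+1) (hab : a ≠ b) :
    (a : ZMod (3*n+1)) ≠ (b : ZMod (3*n+1)) := by
  rw [Ne, zmod_cast_inj n ha hb]; exact hab

lemma jadj_ll (u v : ZMod (3*n+1)) :
    (Jelly n d).Adj (Sum.inl u) (Sum.inl v) ↔ u ≠ v ∧ (v = u + 1 ∨ u = v + 1) := by
  simp [Jelly, SimpleGraph.fromRel_adj, JellyRel]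

lemma jadj_lr (u : ZMod (3*n+1)) (p : Fin n × Fin (d-2)) :
    (Jelly n d).Adj (Sum.inl u) (Sum.inr p) ↔ u = ((3 * p.1.val + 2 : ℕ) : ZMod (3*n+1)) := by
  simp [Jelly, SimpleGraph.fromRel_adj, JellyRel]

lemma jadj_rr (p q : Fin n × Fin (d-2)) :
    ¬ (Jelly n d).Adj (Sum.inr p) (Sum.inr q) := by
  simp [Jelly, SimpleGraph.fromRel_adj, JellyRel]

lemma ndeg_inr (p : Fin n × Fin (d-2)) :
    ndeg (Jelly n d) (Sum.inr p) = 1 := by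
  have hset : (Jelly n d).neighborSet (Sum.inr p)
      = {Sum.inl ((3 * p.1.val + 2 : ℕ) : ZMod (3*n+1))} := by
    ext w
    cases w with
    | inl u =>
      simp only [mem_neighborSet, Set.mem_singleton_iff, Sum.inl.injEq]
      rw [(Jelly n d).adj_comm, jadj_lr]
    | inr q =>
      simp only [mem_neighborSet, Set.mem_singleton_iff]
      constructor
      · intro h; exact absurd h (jadj_rr n d p q)
      · intro h; exact absurd h (by simp)
  rw [ndeg, hset, Set.ncard_singleton]

lemma ndeg_high (hn : 1 ≤ n) (hd : 2 ≤ d) {i : ℕ} (hi : i < n) :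
    ndeg (Jelly n d) (Sum.inl ((3*i+2 : ℕ) : ZMod (3*n+1))) = d := by
  have h1 : (3*i+1) < 3*n+1 := by omega
  have h2 : (3*i+2) < 3*n+1 := by omega
  have h3 : (3*i+3) < 3*n+1 := by omega
  have hset : (Jelly n d).neighborSet (Sum.inl ((3*i+2 : ℕ) : ZMod (3*n+1)))
      = insert (Sum.inl ((3*i+3 : ℕ) : ZMod (3*n+1)))
          (insert (Sum.inl ((3*i+1 : ℕ) : ZMod (3*n+1)))
            (Set.range (fun j : Fin (d-2) => Sum.inr (⟨i, hi⟩, j)))) := by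
    ext w
    cases w with
    | inl u =>
      simp only [mem_neighborSet, jadj_ll, Set.mem_insert_iff, Set.mem_range, Sum.inl.injEq]
      constructor
      · rintro ⟨hne, h | h⟩
        · left
          rw [h]; push_cast; ring
        · right; left
          have : ((3*i+2 : ℕ) : ZMod (3*n+1)) = ((3*i+1 : ℕ) : ZMod (3*n+1)) + 1 := by
            push_cast; ring
          rw [this] at h
          exact (add_left_inj 1).mp h |>.symm
      · rintro (h | h | ⟨j, hj⟩)
        · subst h
          refine ⟨zc_ne n h2 h3 (by omega), Or.inl ?_⟩
          push_cast; ring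
        · subst h
          refine ⟨zc_ne n h2 h1 (by omega), Or.inr ?_⟩
          push_cast; ring
        · exact absurd hj (by simp)
    | inr q =>
      simp only [mem_neighborSet, jadj_lr, Set.mem_insert_iff, Set.mem_range]
      constructor
      · intro h
        right; right
        have hq : 3 * q.1.val + 2 < 3*n+1 := by have := q.1.isLt; omega
        have : 3*i+2 = 3*q.1.val+2 := (zmod_cast_inj n h2 hq).mp h
        have hqi : q.1 = ⟨i, hi⟩ := by
          apply Fin.ext
          show q.1.val = i
          omega
        exact ⟨q.2, by rw [← hqi]⟩
      · rintro (h | h | ⟨j, hj⟩)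
        · exact absurd h (by simp)
        · exact absurd h (by simp)
        · have hq : q = (⟨i, hi⟩, j) := (Sum.inr.inj hj).symm
          subst hq
          simp
  rw [ndeg, hset]
  have hr : (Set.range (fun j : Fin (d-2) => (Sum.inr (⟨i, hi⟩, j) :
      ZMod (3*n+1) ⊕ (Fin n × Fin (d-2))))).ncard = d - 2 := by
    rw [← Set.image_univ, Set.ncard_image_of_injective _ (by
      intro a b hab
      simpa using hab), Set.ncard_univ, Nat.card_eq_fintype_card, Fintype.card_fin]
  rw [Set.ncard_insert_of_notMem, Set.ncard_insert_of_notMem, hr]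
  · omega
  · rintro ⟨j, hj⟩
    exact absurd hj (by simp)
  · simp only [Set.mem_insert_iff, Set.mem_range]
    push_neg
    refine ⟨?_, ?_⟩
    · exact fun hcontra => zc_ne n h3 h1 (by omega) (Sum.inl.inj hcontra)
    · intro j h
      exact absurd h (by simp)

lemma leafrange_ncard (i : Fin n) :
    (Set.range (fun j : Fin (d-2) =>
      (Sum.inr (i, j) : ZMod (3*n+1) ⊕ (Fin n × Fin (d-2))))).ncard = d - 2 := by
  rw [← Set.image_univ, Set.ncard_image_of_injective _ (by
    intro a b hab
    simpa using hab), Set.ncard_univ, Nat.card_eq_fintype_card, Fintype.card_fin]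

lemma ndeg_low1 (hn : 1 ≤ n) :
    ndeg (Jelly n d) (Sum.inl ((1 : ℕ) : ZMod (3*n+1))) = 2 := by
  have h0 : (0:ℕ) < 3*n+1 := by omega
  have h1 : (1:ℕ) < 3*n+1 := by omega
  have h2 : (2:ℕ) < 3*n+1 := by omega
  have hset : (Jelly n d).neighborSet (Sum.inl ((1 : ℕ) : ZMod (3*n+1)))
      = {Sum.inl ((2:ℕ) : ZMod (3*n+1)), Sum.inl ((0:ℕ) : ZMod (3*n+1))} := by
    ext w
    cases w with
    | inl u =>
      simp only [mem_neighborSet, jadj_ll, Set.mem_insert_iff, Set.mem_singleton_iff,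
        Sum.inl.injEq]
      constructor
      · rintro ⟨hne, h | h⟩
        · left; rw [h]; push_cast; ring
        · right
          have : ((1:ℕ) : ZMod (3*n+1)) = ((0:ℕ) : ZMod (3*n+1)) + 1 := by push_cast; ring
          rw [this] at h
          exact ((add_left_inj 1).mp h).symm
      · rintro (h | h)
        · subst h
          refine ⟨zc_ne n h1 h2 (by omega), Or.inl ?_⟩
          push_cast; ring
        · subst h
          refine ⟨zc_ne n h1 h0 (by omega), Or.inr ?_⟩
          push_cast; ring
    | inr q =>
      simp only [mem_neighborSet, jadj_lr, Set.mem_insert_iff, Set.mem_singleton_iff]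
      constructor
      · intro h
        have hq : 3 * q.1.val + 2 < 3*n+1 := by have := q.1.isLt; omega
        have := (zmod_cast_inj n h1 hq).mp h
        omega
      · rintro (h | h) <;> exact absurd h (by simp)
  rw [ndeg, hset, Set.ncard_pair]
  exact fun hcontra => zc_ne n h2 h0 (by omega) (Sum.inl.inj hcontra)

lemma ndeg_le_two {v : ZMod (3*n+1)}
    (hv : ∀ p : Fin n × Fin (d-2), ¬ (Jelly n d).Adj (Sum.inl v) (Sum.inr p)) :
    ndeg (Jelly n d) (Sum.inl v) ≤ 2 := by
  have hsub : (Jelly n d).neighborSet (Sum.inl v)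
      ⊆ {Sum.inl (v+1), Sum.inl (v-1)} := by
    intro w hw
    cases w with
    | inl u =>
      rw [mem_neighborSet, jadj_ll] at hw
      obtain ⟨hne, h | h⟩ := hw
      · left; rw [h]
      · right
        simp only [Set.mem_singleton_iff, Sum.inl.injEq]
        rw [h]; ring
    | inr q => exact absurd hw (hv q)
  calc (ndeg (Jelly n d) (Sum.inl v)) ≤ ({Sum.inl (v+1), Sum.inl (v-1)} :
        Set (ZMod (3*n+1) ⊕ (Fin n × Fin (d-2)))).ncard :=
        Set.ncard_le_ncard hsub (Set.toFinite _)
    _ ≤ _ := by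
        refine le_trans (Set.ncard_insert_le _ _) ?_
        simp [Set.ncard_singleton]

lemma ndeg_le_d (hd : 2 ≤ d) (v : ZMod (3*n+1)) :
    ndeg (Jelly n d) (Sum.inl v) ≤ d := by
  by_cases h : ∃ p : Fin n × Fin (d-2), (Jelly n d).Adj (Sum.inl v) (Sum.inr p)
  · obtain ⟨p, hp⟩ := h
    rw [jadj_lr] at hp
    have hsub : (Jelly n d).neighborSet (Sum.inl v)
        ⊆ insert (Sum.inl (v+1)) (insert (Sum.inl (v-1))
            (Set.range (fun j : Fin (d-2) => Sum.inr (p.1, j)))) := by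
      intro w hw
      cases w with
      | inl u =>
        rw [mem_neighborSet, jadj_ll] at hw
        obtain ⟨hne, h | h⟩ := hw
        · left; rw [h]
        · right; left; rw [h]; ring
      | inr q =>
        rw [mem_neighborSet, jadj_lr] at hw
        right; right
        have hq : 3 * q.1.val + 2 < 3*n+1 := by have := q.1.isLt; omega
        have hpv : 3 * p.1.val + 2 < 3*n+1 := by have := p.1.isLt; omega
        have : 3 * p.1.val + 2 = 3 * q.1.val + 2 :=
          (zmod_cast_inj n hpv hq).mp (hp ▸ hw)
        have hq1 : q.1 = p.1 := Fin.ext (by omega)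
        exact ⟨q.2, by rw [← hq1]⟩
    calc ndeg (Jelly n d) (Sum.inl v) ≤ _ := Set.ncard_le_ncard hsub (Set.toFinite _)
      _ ≤ _ := by
        refine le_trans (Set.ncard_insert_le _ _) ?_
        have := Set.ncard_insert_le (Sum.inl (v-1) :
          ZMod (3*n+1) ⊕ (Fin n × Fin (d-2)))
          (Set.range (fun j : Fin (d-2) => Sum.inr (p.1, j)))
        rw [leafrange_ncard] at this
        omega
  · push_neg at h
    exact le_trans (ndeg_le_two n d h) hd

lemma high_not_adj (hn : 1 ≤ n) {i j : ℕ} (hi : i < n) (hj : j < n) :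
    ¬ (Jelly n d).Adj (Sum.inl ((3*i+2 : ℕ) : ZMod (3*n+1)))
      (Sum.inl ((3*j+2 : ℕ) : ZMod (3*n+1))) := by
  rw [jadj_ll]
  rintro ⟨hne, h | h⟩
  · have h3 : ((3*i+2 : ℕ) : ZMod (3*n+1)) + 1 = ((3*i+3 : ℕ) : ZMod (3*n+1)) := by
      push_cast; ring
    rw [h3] at h
    have := (zmod_cast_inj n (by omega) (by omega)).mp h
    omega
  · have h3 : ((3*j+2 : ℕ) : ZMod (3*n+1)) + 1 = ((3*j+3 : ℕ) : ZMod (3*n+1)) := by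
      push_cast; ring
    rw [h3] at h
    have := (zmod_cast_inj n (by omega) (by omega)).mp h
    omega


lemma jelly_sigma (hn : 1 ≤ n) (hd : 2 ≤ d) : sigmaG (Jelly n d) = d + 1 := by
  have hadj : (Jelly n d).Adj (Sum.inl ((2:ℕ) : ZMod (3*n+1)))
      (Sum.inl ((1:ℕ) : ZMod (3*n+1))) := by
    rw [jadj_ll]
    refine ⟨zc_ne n (by omega) (by omega) (by omega), Or.inr ?_⟩
    push_cast; ring
  have hd2 : ndeg (Jelly n d) (Sum.inl ((2:ℕ) : ZMod (3*n+1))) = d := by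
    have := ndeg_high n d hn hd (show 0 < n from hn)
    norm_num at this
    exact this
  have hmem : d + 1 ∈ {m | ∃ x y, (Jelly n d).Adj x y ∧
      m = ndeg (Jelly n d) x + ndeg (Jelly n d) y - 1} := by
    refine ⟨_, _, hadj, ?_⟩
    rw [hd2, ndeg_low1 n d hn]
    omega
  have hub : ∀ m ∈ {m | ∃ x y, (Jelly n d).Adj x y ∧
      m = ndeg (Jelly n d) x + ndeg (Jelly n d) y - 1}, m ≤ d + 1 := by
    rintro m ⟨x, y, hxy, rfl⟩
    cases x with
    | inl u =>
      cases y with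
      | inl v =>
        have hone : ndeg (Jelly n d) (Sum.inl u) ≤ 2 ∨
            ndeg (Jelly n d) (Sum.inl v) ≤ 2 := by
          by_contra hcon
          push_neg at hcon
          obtain ⟨h1, h2⟩ := hcon
          have e1 : ∃ p : Fin n × Fin (d-2), (Jelly n d).Adj (Sum.inl u) (Sum.inr p) := by
            by_contra he; push_neg at he
            exact absurd (ndeg_le_two n d he) (by omega)
          have e2 : ∃ p : Fin n × Fin (d-2), (Jelly n d).Adj (Sum.inl v) (Sum.inr p) := by
            by_contra he; push_neg at he
            exact absurd (ndeg_le_two n d he) (by omega)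
          obtain ⟨p, hp⟩ := e1
          obtain ⟨q, hq⟩ := e2
          rw [jadj_lr] at hp hq
          rw [hp, hq] at hxy
          exact high_not_adj n d hn p.1.isLt q.1.isLt hxy
        have b1 := ndeg_le_d n d hd u
        have b2 := ndeg_le_d n d hd v
        omega
      | inr q =>
        have := ndeg_inr n d q
        have := ndeg_le_d n d hd u
        omega
    | inr p =>
      cases y with
      | inl v =>
        have := ndeg_inr n d p
        have := ndeg_le_d n d hd v
        omega
      | inr q => exact absurd hxy (jadj_rr n d p q)
  exact le_antisymm (csSup_le ⟨_, hmem⟩ hub) (le_csSup ⟨d+1, fun m hm => hub m hm⟩ hmem)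



def cyE (k : ℕ) : Sym2 (ZMod (3*n+1) ⊕ (Fin n × Fin (d-2))) :=
  s(Sum.inl ((k : ℕ) : ZMod (3*n+1)), Sum.inl ((k+1 : ℕ) : ZMod (3*n+1)))

def lfE (i : Fin n) (j : Fin (d-2)) : Sym2 (ZMod (3*n+1) ⊕ (Fin n × Fin (d-2))) :=
  s(Sum.inl ((3*i.val+2 : ℕ) : ZMod (3*n+1)), Sum.inr (i, j))

def gE (i : ℕ) (k : Fin (d+1)) : Sym2 (ZMod (3*n+1) ⊕ (Fin n × Fin (d-2))) :=
  if h : (k:ℕ) < 3 then cyE n d (3*i + (k:ℕ))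
  else if hi : i < n then lfE n d ⟨i, hi⟩ ⟨(k:ℕ) - 3, by have := k.isLt; omega⟩
  else cyE n d 0

lemma cyE_mem (hn : 1 ≤ n) (k : ℕ) : cyE n d k ∈ (Jelly n d).edgeSet := by
  rw [cyE, SimpleGraph.mem_edgeSet, jadj_ll]
  have h1 : ((k+1:ℕ) : ZMod (3*n+1)) = ((k:ℕ) : ZMod (3*n+1)) + 1 := by push_cast; ring
  refine ⟨?_, Or.inl h1⟩
  intro hc
  rw [h1] at hc
  have h10 := left_eq_add.mp hc
  have ha : (1:ℕ) < 3*n+1 := by omega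
  have hb : (0:ℕ) < 3*n+1 := by omega
  have := zc_ne n ha hb (by omega)
  simp only [Nat.cast_one, Nat.cast_zero] at this
  exact this h10

lemma cyE_ne (hn : 1 ≤ n) {a b : ℕ} (hab : (a : ZMod (3*n+1)) ≠ (b : ZMod (3*n+1))) :
    cyE n d a ≠ cyE n d b := by
  intro h
  rw [cyE, cyE, Sym2.eq_iff] at h
  rcases h with ⟨h1, h2⟩ | ⟨h1, h2⟩
  · exact hab (Sum.inl.inj h1)
  · have e1 := Sum.inl.inj h1
    have e2 := Sum.inl.inj h2
    push_cast at e1 e2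
    have h20 : (0 : ZMod (3*n+1)) = 2 := by linear_combination e1 - e2
    have ha : (2:ℕ) < 3*n+1 := by omega
    have hb : (0:ℕ) < 3*n+1 := by omega
    have := zc_ne n ha hb (by omega)
    simp only [Nat.cast_ofNat, Nat.cast_zero] at this
    exact this h20.symm

lemma lfE_mem (i : Fin n) (j : Fin (d-2)) : lfE n d i j ∈ (Jelly n d).edgeSet := by
  rw [lfE, SimpleGraph.mem_edgeSet, jadj_lr]

lemma cyE_ne_lfE (k : ℕ) (i : Fin n) (j : Fin (d-2)) : cyE n d k ≠ lfE n d i j := by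
  intro h
  rw [cyE, lfE, Sym2.eq_iff] at h
  rcases h with ⟨h1, h2⟩ | ⟨h1, h2⟩
  · exact absurd h2 (by simp)
  · exact absurd h1 (by simp)

lemma gE_mem (hn : 1 ≤ n) (i : ℕ) (k : Fin (d+1)) : gE n d i k ∈ (Jelly n d).edgeSet := by
  rw [gE]
  split_ifs with h h2
  · exact cyE_mem n d hn _
  · exact lfE_mem n d _ _
  · exact cyE_mem n d hn _

lemma gE_zero (i : ℕ) : gE n d i 0 = cyE n d (3*i) := by
  rw [gE, dif_pos (by simp : ((0 : Fin (d+1)):ℕ) < 3)]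
  norm_num

lemma gC {i : ℕ} (hi : i < n) (k : Fin (d+1)) (hk : (k:ℕ) ≠ 0) :
    Sum.inl ((3*i+2 : ℕ) : ZMod (3*n+1)) ∈ gE n d i k := by
  rw [gE]
  by_cases h : (k:ℕ) < 3
  · rw [dif_pos h]
    have hv : (k:ℕ) = 1 ∨ (k:ℕ) = 2 := by omega
    rcases hv with hv | hv <;> rw [hv]
    · have e : 3*i+1+1 = 3*i+2 := by omega
      rw [cyE, Sym2.mem_iff]
      right
      rw [e]
    · rw [cyE, Sym2.mem_iff]; left; rfl
  · rw [dif_neg h, dif_pos hi, lfE, Sym2.mem_iff]; left; rfl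

lemma gB (i : ℕ) : Sum.inl ((3*i+1 : ℕ) : ZMod (3*n+1)) ∈ gE n d i 0 := by
  rw [gE_zero, cyE, Sym2.mem_iff]
  right
  rw [show 3*i+1 = 3*i+0+1 from by omega]

lemma adjBC {i : ℕ} (hi : i < n) :
    (Jelly n d).Adj (Sum.inl ((3*i+1 : ℕ) : ZMod (3*n+1)))
      (Sum.inl ((3*i+2 : ℕ) : ZMod (3*n+1))) := by
  rw [jadj_ll]
  refine ⟨zc_ne n (by omega) (by omega) (by omega), Or.inl ?_⟩
  push_cast; ring

lemma adjCD {i : ℕ} (hi : i < n) :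
    (Jelly n d).Adj (Sum.inl ((3*i+2 : ℕ) : ZMod (3*n+1)))
      (Sum.inl ((3*i+3 : ℕ) : ZMod (3*n+1))) := by
  rw [jadj_ll]
  refine ⟨zc_ne n (by omega) (by omega) (by omega), Or.inl ?_⟩
  push_cast; ring

lemma g_near {i : ℕ} (hi : i < n) (k k' : Fin (d+1)) :
    EdgesNear (Jelly n d) (gE n d i k) (gE n d i k') := by
  by_cases hk : (k:ℕ) = 0 <;> by_cases hk' : (k':ℕ) = 0
  · have h1 : k = 0 := Fin.ext hk
    have h2 : k' = 0 := Fin.ext hk'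
    subst h1; subst h2
    exact ⟨_, _, gB n d i, gB n d i, Or.inl rfl⟩
  · have h1 : k = 0 := Fin.ext hk
    subst h1
    exact ⟨_, _, gB n d i, gC n d hi k' hk', Or.inr (adjBC n d hi)⟩
  · have h2 : k' = 0 := Fin.ext hk'
    subst h2
    exact ⟨_, _, gC n d hi k hk, gB n d i, Or.inr (adjBC n d hi).symm⟩
  · exact ⟨_, _, gC n d hi k hk, gC n d hi k' hk', Or.inl rfl⟩

lemma g_inj (hn : 1 ≤ n) {i : ℕ} (hi : i < n) (k k' : Fin (d+1)) (hkk' : k ≠ k') :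
    gE n d i k ≠ gE n d i k' := by
  have hvne : (k:ℕ) ≠ (k':ℕ) := fun hv => hkk' (Fin.ext hv)
  rw [gE, gE]
  by_cases h : (k:ℕ) < 3 <;> by_cases h' : (k':ℕ) < 3
  · rw [dif_pos h, dif_pos h']
    exact cyE_ne n d hn (zc_ne n (by omega) (by omega) (by omega))
  · rw [dif_pos h, dif_neg h', dif_pos hi]
    exact cyE_ne_lfE n d _ _ _
  · rw [dif_neg h, dif_pos h', dif_pos hi]
    exact fun hc => cyE_ne_lfE n d _ _ _ hc.symm
  · rw [dif_neg h, dif_neg h', dif_pos hi, dif_pos hi]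
    intro hc
    rw [lfE, lfE, Sym2.eq_iff] at hc
    rcases hc with ⟨h1, h2⟩ | ⟨h1, h2⟩
    · have := Sum.inr.inj h2
      have hj : (⟨(k:ℕ)-3, by have := k.isLt; omega⟩ : Fin (d-2))
          = ⟨(k':ℕ)-3, by have := k'.isLt; omega⟩ := (Prod.ext_iff.mp this).2
      have hval := congrArg Fin.val hj
      simp only at hval
      omega
    · exact absurd h1 (by simp)

lemma step_lemma (hn : 1 ≤ n) (hd : 2 ≤ d)
    (φ : Sym2 (ZMod (3*n+1) ⊕ (Fin n × Fin (d-2))) → ℕ)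
    (hb : ∀ e ∈ (Jelly n d).edgeSet, φ e < d + 1)
    (hs : IsStrongEdgeColoring (Jelly n d) φ) {i : ℕ} (hi : i < n) :
    φ (cyE n d (3*i+3)) = φ (cyE n d (3*i)) := by
  have hinj : Function.Injective (fun k : Fin (d+1) =>
      (⟨φ (gE n d i k), hb _ (gE_mem n d hn i k)⟩ : Fin (d+1))) := by
    intro k k' h
    by_contra hkk'
    have hval : φ (gE n d i k) = φ (gE n d i k') := congrArg Fin.val h
    exact hs _ (gE_mem n d hn i k) _ (gE_mem n d hn i k')
      (g_inj n d hn hi k k' hkk') (g_near n d hi k k') hval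
  have hsurj := Finite.injective_iff_surjective.mp hinj
  obtain ⟨k, hk⟩ := hsurj ⟨φ (cyE n d (3*i+3)), hb _ (cyE_mem n d hn _)⟩
  have hkval : φ (gE n d i k) = φ (cyE n d (3*i+3)) := congrArg Fin.val hk
  have hk0 : (k:ℕ) = 0 := by
    by_contra hk0
    have hD : Sum.inl ((3*i+3 : ℕ) : ZMod (3*n+1)) ∈ cyE n d (3*i+3) := by
      rw [cyE, Sym2.mem_iff]; left; rfl
    have hnear : EdgesNear (Jelly n d) (gE n d i k) (cyE n d (3*i+3)) :=
      ⟨_, _, gC n d hi k hk0, hD, Or.inr (adjCD n d hi)⟩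
    have hne : gE n d i k ≠ cyE n d (3*i+3) := by
      rw [gE]
      by_cases h3 : (k:ℕ) < 3
      · rw [dif_pos h3]
        exact cyE_ne n d hn (zc_ne n (by omega) (by omega) (by omega))
      · rw [dif_neg h3, dif_pos hi]
        exact fun hc => cyE_ne_lfE n d _ _ _ hc.symm
    exact hs _ (gE_mem n d hn i k) _ (cyE_mem n d hn _) hne hnear hkval
  have hke : gE n d i k = cyE n d (3*i) := by
    have hz : k = 0 := Fin.ext hk0
    rw [hz, gE_zero]
  rw [← hkval, hke]

lemma chain_lemma (hn : 1 ≤ n) (hd : 2 ≤ d)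
    (φ : Sym2 (ZMod (3*n+1) ⊕ (Fin n × Fin (d-2))) → ℕ)
    (hb : ∀ e ∈ (Jelly n d).edgeSet, φ e < d + 1)
    (hs : IsStrongEdgeColoring (Jelly n d) φ) :
    ∀ i, i ≤ n → φ (cyE n d (3*i)) = φ (cyE n d 0) := by
  intro i
  induction i with
  | zero => intro _; norm_num
  | succ i ih =>
    intro hle
    have h1 : 3*(i+1) = 3*i+3 := by ring
    rw [h1, step_lemma n d hn hd φ hb hs (show i < n by omega), ih (by omega)]

lemma no_small_coloring (hn : 1 ≤ n) (hd : 2 ≤ d)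
    (φ : Sym2 (ZMod (3*n+1) ⊕ (Fin n × Fin (d-2))) → ℕ)
    (hb : ∀ e ∈ (Jelly n d).edgeSet, φ e < d + 1)
    (hs : IsStrongEdgeColoring (Jelly n d) φ) : False := by
  have h1 := chain_lemma n d hn hd φ hb hs n le_rfl
  have hne : cyE n d (3*n) ≠ cyE n d 0 :=
    cyE_ne n d hn (zc_ne n (by omega) (by omega) (by omega))
  have hnear : EdgesNear (Jelly n d) (cyE n d (3*n)) (cyE n d 0) := by
    refine ⟨Sum.inl ((3*n+1 : ℕ) : ZMod (3*n+1)), Sum.inl ((0:ℕ) : ZMod (3*n+1)),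
      ?_, ?_, Or.inl ?_⟩
    · rw [cyE, Sym2.mem_iff]; right; rfl
    · rw [cyE, Sym2.mem_iff]; left; rfl
    · simp [ZMod.natCast_self]
  exact hs _ (cyE_mem n d hn _) _ (cyE_mem n d hn _) hne hnear h1


end JellyAux

theorem jelly_sigma_lt_strongChromaticIndex (n d : ℕ) (hn : 1 ≤ n) (hd : 2 ≤ d) :
    sigmaG (Jelly n d) = d + 1 ∧ sigmaG (Jelly n d) < strongChromaticIndex (Jelly n d) := by
  refine ⟨jelly_sigma n d hn hd, ?_⟩
  rw [jelly_sigma n d hn hd, strongChromaticIndex]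
  classical
  have hTne : {k | ∃ φ : Sym2 (ZMod (3*n+1) ⊕ (Fin n × Fin (d-2))) → ℕ,
      (∀ e ∈ (Jelly n d).edgeSet, φ e < k) ∧
        IsStrongEdgeColoring (Jelly n d) φ}.Nonempty := by
    refine ⟨Fintype.card (Sym2 (ZMod (3*n+1) ⊕ (Fin n × Fin (d-2)))),
      fun e => ((Fintype.equivFin _) e : ℕ), fun e _ => (Fintype.equivFin _ e).isLt, ?_⟩
    intro e _ f _ hne _ hphi
    exact hne ((Fintype.equivFin _).injective (Fin.ext hphi))
  have hmemInf := Nat.sInf_mem hTne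
  obtain ⟨φ, hbk, hsk⟩ := hmemInf
  by_contra hlt
  push_neg at hlt
  exact no_small_coloring n d hn hd φ
    (fun e he => lt_of_lt_of_le (hbk e he) hlt) hsk
end
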